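/- Kripke completeness of ℜ: for every formula φ₀ of 𝓛, if φ₀ is not a theorem of ℜ, then there exist a Kripke model ⟨W, →, ⊩⟩ and a world w ∈ W such that w ⊮ φ₀. -/
import Mathlib


/-- Formulas of the modal language 𝓛: propositional variables, ⊥, →, and ▷. -/
inductive Formula : Type
  | var : ℕ → Formula
  | bot : Formula
  | imp : Formula → Formula → Formula
  | tri : Formula → Formula → Formula
deriving DecidableEq

namespace Formula

/-- ¬φ := φ → ⊥ -/
def neg (φ : Formula) : Formula := imp φ bot
/-- ⊤ := ¬⊥ -/
def top : Formula := neg bot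
/-- φ ∨ ψ := ¬φ → ψ -/
def disj (φ ψ : Formula) : Formula := imp (neg φ) ψ
/-- φ ∧ ψ := ¬(φ → ¬ψ) -/
def conj (φ ψ : Formula) : Formula := neg (imp φ (neg ψ))

/-- `φ` is a substitution instance of a classical propositional tautology:
it evaluates to `true` under every boolean valuation of formulas that
respects `⊥` and `→` (variables and `▷`-formulas are treated as atoms). -/
def IsPropTaut (φ : Formula) : Prop :=
  ∀ v : Formula → Bool, v bot = false →
    (∀ a b, v (imp a b) = (!(v a) || v b)) → v φ = true

/-- Hilbert-style provability.  `Prv false` is the logic ℜ (axioms: classical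
tautologies, A1, A2, A3; rules: Modus Ponens and monotonicity M);
`Prv true` is the logic ℜ_d, which additionally has axiom A4. -/
inductive Prv : Bool → Formula → Prop
  | taut {d : Bool} {φ} : IsPropTaut φ → Prv d φ
  | a1 {d : Bool} (φ ψ χ) : Prv d (imp (tri φ ψ) (imp (tri χ ψ) (tri (disj φ χ) ψ)))
  | a2 {d : Bool} (φ) : Prv d (tri bot φ)
  | a3 {d : Bool} (φ) : Prv d (tri φ top)
  | a4 (φ ψ χ) : Prv true (imp (tri φ ψ) (imp (tri φ χ) (tri φ (conj ψ χ))))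
  | mp {d : Bool} {φ ψ} : Prv d (imp φ ψ) → Prv d φ → Prv d ψ
  | mono {d : Bool} {φ₁ φ₂ ψ₁ ψ₂} : Prv d (imp φ₁ φ₂) → Prv d (imp ψ₁ ψ₂) →
      Prv d (imp (tri φ₂ ψ₁) (tri φ₁ ψ₂))

/-- `Deriv d Δ φ`: φ is derivable from the hypotheses Δ together with all
theorems of the logic (`Prv d`) using only Modus Ponens. -/
inductive Deriv (d : Bool) (Δ : Set Formula) : Formula → Prop
  | hyp {φ} : φ ∈ Δ → Deriv d Δ φ
  | thm {φ} : Prv d φ → Deriv d Δ φ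
  | mp {φ ψ} : Deriv d Δ (imp φ ψ) → Deriv d Δ φ → Deriv d Δ ψ

/-- Conjunction of a list of formulas (empty conjunction is ⊤). -/
def conjList : List Formula → Formula
  | [] => top
  | φ :: l => conj φ (conjList l)

/-- ⋀Γ : conjunction of all formulas of a finite set Γ (⋀∅ = ⊤). -/
noncomputable def bigConj (Γ : Finset Formula) : Formula := conjList Γ.toList

/-- A set of formulas is consistent if ⊥ is not derivable from it. -/
def Consistent (d : Bool) (Δ : Set Formula) : Prop := ¬ Deriv d Δ bot

/-- The pair (u,v) is w-consistent: w ⊬ ⋀u ▷ ¬⋀v. -/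
def WCons (d : Bool) (w : Set Formula) (u v : Finset Formula) : Prop :=
  ¬ Deriv d w (tri (bigConj u) (neg (bigConj v)))

/-- The operation ∼: ∼(¬φ) = φ, and ∼φ = ¬φ if φ is not a negation. -/
def simNeg : Formula → Formula
  | imp φ bot => φ
  | φ => neg φ

/-- Φ is closed under subformulas. -/
def SubClosed (Φ : Finset Formula) : Prop :=
  (∀ a b, imp a b ∈ Φ → a ∈ Φ ∧ b ∈ Φ) ∧ (∀ a b, tri a b ∈ Φ → a ∈ Φ ∧ b ∈ Φ)

/-- Φ is closed under the operation ∼. -/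
def SimClosed (Φ : Finset Formula) : Prop := ∀ φ ∈ Φ, simNeg φ ∈ Φ

/-- w is a maximal consistent subset of Φ: w ⊆ Φ, w is consistent, and for
every φ ∈ Φ either φ ∈ w or ∼φ ∈ w. -/
def MaxCons (d : Bool) (Φ : Finset Formula) (w : Finset Formula) : Prop :=
  w ⊆ Φ ∧ Consistent d ↑w ∧ ∀ φ ∈ Φ, φ ∈ w ∨ simNeg φ ∈ w

/-- Kripke forcing: `rel w u v` means u →_w v, `val w p` means w ⊩ p. -/
def Forces {W : Type*} (rel : W → W → W → Prop) (val : W → ℕ → Prop) :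
    W → Formula → Prop
  | w, var p => val w p
  | _, bot => False
  | w, imp a b => Forces rel val w a → Forces rel val w b
  | w, tri a b => ∀ u v, rel w u v → Forces rel val u a →
      ∃ v', rel w u v' ∧ Forces rel val v' b

end Formula

/-- A Kripke model: a finite set of worlds, a ternary computability relation,
and a forcing relation between worlds and propositional variables. -/
structure KripkeModel where
  W : Type
  fin : Finite W
  rel : W → W → W → Prop
  val : W → ℕ → Prop

/-- A Kripke model is deterministic if for all worlds w, u there is at most
one v with u →_w v. -/
def KripkeModel.Deterministic (M : KripkeModel) : Prop :=
  ∀ w u v v', M.rel w u v → M.rel w u v' → v = v'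

/-- Forcing in a Kripke model. -/
def KripkeModel.Forces (M : KripkeModel) : M.W → Formula → Prop :=
  Formula.Forces M.rel M.val

/-- The standard enumeration of nondeterministic partial recursive functions:
ζ_w(u) = the set of possible outputs of machine (code) w on input u. -/
def zeta (w u : ℕ) : Set ℕ :=
  {v | ((Denumerable.ofNat Nat.Partrec.Code w).eval (Nat.pair u v)).Dom}

/-- The standard enumeration of deterministic partial recursive functions:
ξ_w(u) = the value of the partial recursive function with code w on input u. -/
def xi (w u : ℕ) : Part ℕ :=
  (Denumerable.ofNat Nat.Partrec.Code w).eval u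

namespace Formula

/-- Set semantics for nondeterministic partial recursive functions
(existential reading of ▷). -/
def semN (val : ℕ → Set ℕ) : Formula → Set ℕ
  | var p => val p
  | bot => ∅
  | imp a b => (Set.univ \ semN val a) ∪ semN val b
  | tri a b => {w | ∀ u ∈ semN val a, zeta w u ≠ ∅ → zeta w u ∩ semN val b ≠ ∅}

/-- Set semantics for deterministic partial recursive functions. -/
def semD (val : ℕ → Set ℕ) : Formula → Set ℕ
  | var p => val p
  | bot => ∅
  | imp a b => (Set.univ \ semD val a) ∪ semD val b
  | tri a b => {w | ∀ u ∈ semD val a, ∀ h : (xi w u).Dom, (xi w u).get h ∈ semD val b}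

/-- Universal set semantics for nondeterministic partial recursive functions:
every terminating computation path from φ* ends in ψ*. -/
def semU (val : ℕ → Set ℕ) : Formula → Set ℕ
  | var p => val p
  | bot => ∅
  | imp a b => (Set.univ \ semU val a) ∪ semU val b
  | tri a b => {w | ∀ u ∈ semU val a, zeta w u ⊆ semU val b}

/-- A canonical injective encoding of formulas as natural numbers. -/
def enc : Formula → ℕ
  | var n => 4 * n
  | bot => 1
  | imp a b => 4 * Nat.pair (enc a) (enc b) + 2
  | tri a b => 4 * Nat.pair (enc a) (enc b) + 3

end Formula
namespace Formula

section Taut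

variable {d : Bool} {a b c φ ψ χ γ : Formula}

/-- Helper: value of `neg`. -/
lemma val_neg (v : Formula → Bool) (hb : v bot = false)
    (hi : ∀ a b, v (imp a b) = (!(v a) || v b)) (a : Formula) :
    v (neg a) = !v a := by simp [neg, hi, hb]

lemma val_top (v : Formula → Bool) (hb : v bot = false)
    (hi : ∀ a b, v (imp a b) = (!(v a) || v b)) :
    v top = true := by simp [top, neg, hi, hb]

lemma val_conj (v : Formula → Bool) (hb : v bot = false)
    (hi : ∀ a b, v (imp a b) = (!(v a) || v b)) (a b : Formula) :
    v (conj a b) = (v a && v b) := by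
  simp [conj, neg, hi, hb]

lemma val_disj (v : Formula → Bool) (hb : v bot = false)
    (hi : ∀ a b, v (imp a b) = (!(v a) || v b)) (a b : Formula) :
    v (disj a b) = (v a || v b) := by
  simp [disj, neg, hi, hb]

lemma prv_id : Prv d (imp a a) := by
  refine .taut fun v hb hi => ?_
  simp [hi]

lemma prv_K : Prv d (imp a (imp b a)) := by
  refine .taut fun v hb hi => ?_
  simp only [hi]
  cases v a <;> cases v b <;> rfl

lemma prv_S : Prv d (imp (imp a (imp b c)) (imp (imp a b) (imp a c))) := by
  refine .taut fun v hb hi => ?_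
  simp only [hi]
  cases v a <;> cases v b <;> cases v c <;> rfl

lemma prv_mp_imp (h1 : Prv d (imp γ (imp a b))) (h2 : Prv d (imp γ a)) :
    Prv d (imp γ b) := (Prv.mp (Prv.mp prv_S h1) h2)

lemma prv_imp_of (h : Prv d b) : Prv d (imp a b) := Prv.mp prv_K h

lemma prv_comp (h1 : Prv d (imp a b)) (h2 : Prv d (imp b c)) : Prv d (imp a c) :=
  prv_mp_imp (prv_imp_of h2) h1

lemma prv_conj_left : Prv d (imp (conj a b) a) := by
  refine .taut fun v hb hi => ?_
  simp only [conj, neg, hi, hb]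
  cases v a <;> cases v b <;> rfl

lemma prv_conj_right : Prv d (imp (conj a b) b) := by
  refine .taut fun v hb hi => ?_
  simp only [conj, neg, hi, hb]
  cases v a <;> cases v b <;> rfl

lemma prv_conjList_mem {l : List Formula} (h : a ∈ l) : Prv d (imp (conjList l) a) := by
  induction l with
  | nil => simp at h
  | cons x l ih =>
    rcases List.mem_cons.1 h with rfl | h
    · exact prv_conj_left
    · exact prv_comp prv_conj_right (ih h)

lemma prv_bigConj_mem {s : Finset Formula} (h : a ∈ s) : Prv d (imp (bigConj s) a) :=
  prv_conjList_mem ((Finset.mem_toList).2 h)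

end Taut

end Formula
namespace Formula

section Deriv

variable {d : Bool} {a b c φ ψ χ : Formula} {Δ Δ' : Set Formula}

lemma Deriv.mono_set (h : Deriv d Δ φ) (hs : Δ ⊆ Δ') : Deriv d Δ' φ := by
  induction h with
  | hyp h => exact .hyp (hs h)
  | thm h => exact .thm h
  | mp _ _ ih1 ih2 => exact .mp ih1 ih2

/-- Deduction theorem. -/
lemma deriv_deduction (h : Deriv d (insert ψ Δ) χ) : Deriv d Δ (imp ψ χ) := by
  induction h with
  | @hyp φ h =>
    rcases h with rfl | h
    · exact .thm prv_id
    · exact .mp (.thm prv_K) (.hyp h)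
  | thm h => exact .mp (.thm prv_K) (.thm h)
  | @mp φ χ _ _ ih1 ih2 => exact .mp (.mp (.thm prv_S) ih1) ih2

/-- From a derivation from a finite set, get a theorem with the conjunction as antecedent. -/
lemma prv_bigConj_of_deriv {s : Finset Formula} (h : Deriv d ↑s ψ) :
    Prv d (imp (bigConj s) ψ) := by
  induction h with
  | @hyp φ h => exact prv_bigConj_mem h
  | thm h => exact prv_imp_of h
  | mp _ _ ih1 ih2 => exact prv_mp_imp ih1 ih2

lemma simNeg_of_ne_bot (h : b ≠ bot) : simNeg (imp a b) = neg (imp a b) := by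
  cases b <;> simp_all [simNeg]

lemma simNeg_var (n : ℕ) : simNeg (var n) = neg (var n) := rfl
lemma simNeg_bot : simNeg bot = neg bot := rfl
lemma simNeg_tri : simNeg (tri a b) = neg (tri a b) := rfl
lemma simNeg_neg : simNeg (neg a) = a := rfl

/-- `∼φ → ¬φ` is provable. -/
lemma prv_simNeg_imp_neg : Prv d (imp (simNeg φ) (neg φ)) := by
  have generic : ∀ ψ : Formula, Prv d (imp (neg ψ) (neg ψ)) := fun _ => prv_id
  match φ with
  | var n => exact prv_id
  | bot => exact prv_id
  | tri a b => exact prv_id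
  | imp a (var n) => rw [simNeg_of_ne_bot (by simp)]; exact prv_id
  | imp a (imp x y) => rw [simNeg_of_ne_bot (by simp)]; exact prv_id
  | imp a (tri x y) => rw [simNeg_of_ne_bot (by simp)]; exact prv_id
  | imp a bot =>
    show Prv d (imp a (neg (imp a bot)))
    refine .taut fun v hb hi => ?_
    simp only [neg, hi, hb]
    cases v a <;> rfl

/-- `¬φ → ∼φ` is provable. -/
lemma prv_neg_imp_simNeg : Prv d (imp (neg φ) (simNeg φ)) := by
  match φ with
  | var n => exact prv_id
  | bot => exact prv_id
  | tri a b => exact prv_id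
  | imp a (var n) => rw [simNeg_of_ne_bot (by simp)]; exact prv_id
  | imp a (imp x y) => rw [simNeg_of_ne_bot (by simp)]; exact prv_id
  | imp a (tri x y) => rw [simNeg_of_ne_bot (by simp)]; exact prv_id
  | imp a bot =>
    show Prv d (imp (neg (imp a bot)) a)
    refine .taut fun v hb hi => ?_
    simp only [neg, hi, hb]
    cases v a <;> rfl

lemma val_simNeg (v : Formula → Bool) (hb : v bot = false)
    (hi : ∀ a b, v (imp a b) = (!(v a) || v b)) (φ : Formula) :
    v (simNeg φ) = !v φ := by
  match φ with
  | var n => simp [simNeg, neg, hi, hb]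
  | bot => simp [simNeg, neg, hi, hb]
  | tri a b => simp [simNeg, neg, hi, hb]
  | imp a (var n) => rw [simNeg_of_ne_bot (by simp)]; simp [neg, hi, hb]
  | imp a (imp x y) => rw [simNeg_of_ne_bot (by simp)]; simp [neg, hi, hb]
  | imp a (tri x y) => rw [simNeg_of_ne_bot (by simp)]; simp [neg, hi, hb]
  | imp a bot => show v a = _; simp [hi, hb]

/-- In a consistent set containing both `φ` and `∼φ` we can derive ⊥. -/
lemma deriv_bot_of_mem_simNeg (h1 : φ ∈ Δ) (h2 : simNeg φ ∈ Δ) : Deriv d Δ bot := by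
  have hn : Deriv d Δ (neg φ) := .mp (.thm prv_simNeg_imp_neg) (.hyp h2)
  exact .mp hn (.hyp h1)

end Deriv

end Formula
namespace Formula

section MaximalSets

variable {d : Bool} {a b c θ φ ψ χ : Formula} {Φ : Finset Formula}

open Classical in
/-- All "maximal" subsets of Φ (not necessarily consistent). -/
noncomputable def maximalSets (Φ : Finset Formula) : Finset (Finset Formula) :=
  Φ.powerset.filter (fun m => ∀ φ ∈ Φ, φ ∈ m ∨ simNeg φ ∈ m)

lemma mem_maximalSets {m : Finset Formula} :
    m ∈ maximalSets Φ ↔ m ⊆ Φ ∧ ∀ φ ∈ Φ, φ ∈ m ∨ simNeg φ ∈ m := by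
  classical
  simp [maximalSets, Finset.mem_filter, Finset.mem_powerset]

lemma prv_exfalso : Prv d (imp bot a) := by
  refine .taut fun v hb hi => ?_
  simp [hi, hb]

lemma prv_of_inconsistent {m : Finset Formula} (h : ¬ Consistent d ↑m) :
    Prv d (imp (bigConj m) θ) := by
  rw [Consistent, not_not] at h
  exact prv_comp (prv_bigConj_of_deriv h) prv_exfalso

lemma val_conjList_true {v : Formula → Bool} (hb : v bot = false)
    (hi : ∀ a b, v (imp a b) = (!(v a) || v b)) {l : List Formula}
    (h : ∀ φ ∈ l, v φ = true) : v (conjList l) = true := by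
  induction l with
  | nil => exact val_top v hb hi
  | cons x l ih =>
    show v (conj x (conjList l)) = true
    rw [val_conj v hb hi]
    simp [h x (by simp), ih fun φ hφ => h φ (by simp [hφ])]

lemma val_bigConj_true {v : Formula → Bool} (hb : v bot = false)
    (hi : ∀ a b, v (imp a b) = (!(v a) || v b)) {m : Finset Formula}
    (h : ∀ φ ∈ m, v φ = true) : v (bigConj m) = true :=
  val_conjList_true hb hi (fun φ hφ => h φ (by simpa using hφ))

/-- Nested implication (⋀m₁→θ)→(⋀m₂→θ)→⋯→θ. -/
noncomputable def impChain (θ : Formula) : List (Finset Formula) → Formula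
  | [] => θ
  | m :: L => imp (imp (bigConj m) θ) (impChain θ L)

lemma val_impChain_of_theta {v : Formula → Bool}
    (hi : ∀ a b, v (imp a b) = (!(v a) || v b)) {L : List (Finset Formula)}
    (h : v θ = true) : v (impChain θ L) = true := by
  induction L with
  | nil => exact h
  | cons m L ih => simp only [impChain]; rw [hi]; simp [ih]

lemma val_impChain_of_ex {v : Formula → Bool}
    (hi : ∀ a b, v (imp a b) = (!(v a) || v b)) {L : List (Finset Formula)}
    (h : ∃ m ∈ L, v (bigConj m) = true) : v (impChain θ L) = true := by
  induction L with
  | nil => simp at h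
  | cons m L ih =>
    simp only [impChain]
    rw [hi]
    rcases h with ⟨m', hm', hv⟩
    rcases List.mem_cons.1 hm' with rfl | hm'
    · cases hc : v (imp (bigConj m') θ)
      · simp [hi] at hc ⊢
      · have : v θ = true := by rw [hi, hv] at hc; simpa using hc
        simp [val_impChain_of_theta hi this]
    · simp [ih ⟨m', hm', hv⟩]

lemma prv_of_impChain {L : List (Finset Formula)} (h : Prv d (impChain θ L))
    (H : ∀ m ∈ L, Prv d (imp (bigConj m) θ)) : Prv d θ := by
  induction L with
  | nil => exact h
  | cons m L ih =>
    simp only [impChain] at h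
    exact ih (Prv.mp h (H m (by simp))) fun m' hm' => H m' (by simp [hm'])

/-- Key lemma: to prove θ it suffices to prove ⋀m → θ for every maximal subset of Φ. -/
lemma prv_of_maximal (hsim : SimClosed Φ)
    (H : ∀ m ∈ maximalSets Φ, Prv d (imp (bigConj m) θ)) : Prv d θ := by
  classical
  refine prv_of_impChain (L := (maximalSets Φ).toList) (Prv.taut fun v hb hi => ?_)
    (fun m hm => H m (Finset.mem_toList.1 hm))
  refine val_impChain_of_ex hi ⟨Φ.filter (fun φ => v φ = true), ?_, ?_⟩
  · rw [Finset.mem_toList, mem_maximalSets]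
    refine ⟨Finset.filter_subset _ _, fun φ hφ => ?_⟩
    cases hv : v φ
    · exact Or.inr (Finset.mem_filter.2 ⟨hsim φ hφ, by rw [val_simNeg v hb hi, hv]; rfl⟩)
    · exact Or.inl (Finset.mem_filter.2 ⟨hφ, hv⟩)
  · exact val_bigConj_true hb hi fun φ hφ => (Finset.mem_filter.1 hφ).2

end MaximalSets

end Formula
namespace Formula

section Existence

variable {d : Bool} {a b α β φ ψ χ : Formula} {Φ x u : Finset Formula} {Δ : Set Formula}

noncomputable def disjConj : List (Finset Formula) → Formula
  | [] => bot
  | m :: L => disj (bigConj m) (disjConj L)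

lemma deriv_tri_disjConj {L : List (Finset Formula)}
    (H : ∀ m ∈ L, Deriv d Δ (tri (bigConj m) b)) :
    Deriv d Δ (tri (disjConj L) b) := by
  induction L with
  | nil => exact .thm (Prv.a2 b)
  | cons m L ih =>
    simp only [disjConj]
    exact .mp (.mp (.thm (Prv.a1 _ _ _)) (H m (by simp)))
      (ih fun m' hm' => H m' (by simp [hm']))

lemma val_disjConj_of_ex {v : Formula → Bool} (hb : v bot = false)
    (hi : ∀ a b, v (imp a b) = (!(v a) || v b)) {L : List (Finset Formula)}
    (h : ∃ m ∈ L, v (bigConj m) = true) : v (disjConj L) = true := by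
  induction L with
  | nil => simp at h
  | cons m L ih =>
    simp only [disjConj]
    rw [val_disj v hb hi]
    rcases h with ⟨m', hm', hv⟩
    rcases List.mem_cons.1 hm' with rfl | hm'
    · simp [hv]
    · simp [ih ⟨m', hm', hv⟩]

lemma prv_negE : Prv d (imp (neg a) (imp a b)) := by
  refine .taut fun v hb hi => ?_
  simp only [neg, hi, hb]
  cases v a <;> rfl

/-- If ⋀m ▷ b is derivable for every maximal consistent m containing α,
then α ▷ b is derivable. -/
lemma deriv_tri_of_all (hsim : SimClosed Φ) (hαΦ : α ∈ Φ)
    (H : ∀ m, MaxCons d Φ m → α ∈ m → Deriv d Δ (tri (bigConj m) b)) :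
    Deriv d Δ (tri α b) := by
  classical
  set L := ((maximalSets Φ).filter (fun m => α ∈ m)).toList with hL
  have h1 : ∀ m ∈ L, Deriv d Δ (tri (bigConj m) b) := by
    intro m hm
    rw [hL, Finset.mem_toList, Finset.mem_filter] at hm
    obtain ⟨hmax, hαm⟩ := hm
    rw [mem_maximalSets] at hmax
    by_cases hc : Consistent d ↑m
    · exact H m ⟨hmax.1, hc, hmax.2⟩ hαm
    · exact .thm (.mp (.mono (prv_of_inconsistent hc) prv_id) (Prv.a2 b))
  have h2 : Deriv d Δ (tri (disjConj L) b) := deriv_tri_disjConj h1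
  have h3 : Prv d (imp α (disjConj L)) := by
    refine .taut fun v hb hi => ?_
    rw [hi]
    cases hv : v α
    · rfl
    · have hmem : Φ.filter (fun φ => v φ = true) ∈ (maximalSets Φ).filter (fun m => α ∈ m) := by
        rw [Finset.mem_filter, mem_maximalSets]
        refine ⟨⟨Finset.filter_subset _ _, fun φ hφ => ?_⟩, Finset.mem_filter.2 ⟨hαΦ, hv⟩⟩
        cases hvφ : v φ
        · exact Or.inr (Finset.mem_filter.2 ⟨hsim φ hφ, by rw [val_simNeg v hb hi, hvφ]; rfl⟩)
        · exact Or.inl (Finset.mem_filter.2 ⟨hφ, hvφ⟩)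
      have := val_disjConj_of_ex hb hi (L := L)
        ⟨_, Finset.mem_toList.2 hmem, val_bigConj_true hb hi fun φ hφ => (Finset.mem_filter.1 hφ).2⟩
      simp [this]
  exact .mp (.thm (Prv.mono h3 prv_id)) h2

/-- Existence lemma: if x is maximal consistent and tri α b ∈ Φ \ x then there is a
maximal consistent m ∋ α with x ⊬ ⋀m ▷ b. -/
lemma exists_witness (hsim : SimClosed Φ) (hx : MaxCons d Φ x)
    (hmem : tri α b ∈ Φ) (hnot : tri α b ∉ x) (hαΦ : α ∈ Φ) :
    ∃ m, MaxCons d Φ m ∧ α ∈ m ∧ ¬ Deriv d ↑x (tri (bigConj m) b) := by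
  by_contra hcon
  push_neg at hcon
  have htri : Deriv d ↑x (tri α b) :=
    deriv_tri_of_all hsim hαΦ fun m hm hαm => hcon m hm hαm
  have hsn : simNeg (tri α b) ∈ x := (hx.2.2 _ hmem).resolve_left hnot
  rw [simNeg_tri] at hsn
  exact hx.2.1 (.mp (.hyp (by exact_mod_cast hsn)) htri)

/-- If x ⊬ ⋀u ▷ b then there is a maximal consistent m with b ∉ m. -/
lemma exists_maxcons_not_mem (hsim : SimClosed Φ)
    (hne : ¬ Deriv d ↑x (tri (bigConj u) b)) :
    ∃ m, MaxCons d Φ m ∧ b ∉ m := by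
  by_contra hcon
  push_neg at hcon
  have hb : Prv d b := by
    refine prv_of_maximal hsim fun m hm => ?_
    by_cases hc : Consistent d ↑m
    · rw [mem_maximalSets] at hm
      exact prv_bigConj_mem (hcon m ⟨hm.1, hc, hm.2⟩)
    · exact prv_of_inconsistent hc
  exact hne (.thm (.mp (.mono prv_id (prv_imp_of hb)) (Prv.a3 _)))

/-- If x ⊢ α ▷ β, α ∈ u, x ⊬ ⋀u ▷ b then there is a maximal consistent m with
β ∈ m and b ∉ m. -/
lemma exists_maxcons_mem_not_mem (hsim : SimClosed Φ) (hβΦ : β ∈ Φ) (hαu : α ∈ u)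
    (hne : ¬ Deriv d ↑x (tri (bigConj u) b)) (hd : Deriv d ↑x (tri α β)) :
    ∃ m, MaxCons d Φ m ∧ β ∈ m ∧ b ∉ m := by
  by_contra hcon
  push_neg at hcon
  have hββ : Prv d (imp β b) := by
    refine prv_of_maximal hsim fun m hm => ?_
    by_cases hc : Consistent d ↑m
    · rw [mem_maximalSets] at hm
      by_cases hβm : β ∈ m
      · exact prv_comp (prv_bigConj_mem (hcon m ⟨hm.1, hc, hm.2⟩ hβm)) prv_K
      · have hsn : simNeg β ∈ m := (hm.2 β hβΦ).resolve_left hβm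
        exact prv_comp (prv_comp (prv_bigConj_mem hsn) prv_simNeg_imp_neg) prv_negE
    · exact prv_of_inconsistent hc
  exact hne (.mp (.thm (Prv.mono (prv_bigConj_mem hαu) hββ)) hd)

end Existence

end Formula
namespace Formula

section Lindenbaum

variable {d : Bool} {φ ψ : Formula} {Φ : Finset Formula}

lemma prv_neg_simNeg_imp : Prv d (imp (neg (simNeg φ)) φ) := by
  match φ with
  | var n => refine .taut fun v hb hi => ?_; simp only [simNeg, neg, hi, hb]; cases v (var n) <;> rfl
  | bot => refine .taut fun v hb hi => ?_; simp only [simNeg, neg, hi, hb]; rfl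
  | tri a b => refine .taut fun v hb hi => ?_; simp only [simNeg, neg, hi, hb]; cases v (tri a b) <;> rfl
  | imp a (var n) =>
    rw [simNeg_of_ne_bot (by simp)]
    refine .taut fun v hb hi => ?_; simp only [neg, hi, hb]
    cases v a <;> cases v (var n) <;> rfl
  | imp a (imp x y) =>
    rw [simNeg_of_ne_bot (by simp)]
    refine .taut fun v hb hi => ?_; simp only [neg, hi, hb]
    cases v a <;> cases v x <;> cases v y <;> rfl
  | imp a (tri x y) =>
    rw [simNeg_of_ne_bot (by simp)]
    refine .taut fun v hb hi => ?_; simp only [neg, hi, hb]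
    cases v a <;> cases v (tri x y) <;> rfl
  | imp a bot =>
    show Prv d (imp (neg a) (imp a bot))
    refine .taut fun v hb hi => ?_; simp only [neg, hi, hb]; cases v a <;> rfl

lemma deriv_empty (h : Deriv d ∅ ψ) : Prv d ψ := by
  induction h with
  | hyp h => simp at h
  | thm h => exact h
  | mp _ _ ih1 ih2 => exact .mp ih1 ih2

lemma consistent_singleton_simNeg (h : ¬ Prv d φ) :
    Consistent d ↑({simNeg φ} : Finset Formula) := by
  intro hder
  have : Deriv d (insert (simNeg φ) ∅) bot := by
    refine hder.mono_set ?_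
    simp
  have h2 : Prv d (neg (simNeg φ)) := deriv_empty (deriv_deduction this)
  exact h (.mp prv_neg_simNeg_imp h2)

lemma consistent_step {Δ : Finset Formula} (hcons : Consistent d ↑Δ) (φ : Formula) :
    Consistent d ↑(insert φ Δ) ∨ Consistent d ↑(insert (simNeg φ) Δ) := by
  by_contra hcon
  push_neg at hcon
  obtain ⟨h1, h2⟩ := hcon
  rw [Consistent, not_not, Finset.coe_insert] at h1 h2
  have d1 : Deriv d ↑Δ (neg φ) := deriv_deduction h1
  have d2 : Deriv d ↑Δ (neg (simNeg φ)) := deriv_deduction h2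
  exact hcons (.mp d2 (.mp (.thm prv_neg_imp_simNeg) d1))

lemma lindenbaum_aux (hsim : SimClosed Φ) (Φ' : Finset Formula) (hΦ' : Φ' ⊆ Φ) :
    ∀ Δ : Finset Formula, Δ ⊆ Φ → Consistent d ↑Δ →
      ∃ m, Δ ⊆ m ∧ m ⊆ Φ ∧ Consistent d ↑m ∧ ∀ φ ∈ Φ', φ ∈ m ∨ simNeg φ ∈ m := by
  classical
  induction Φ' using Finset.induction_on with
  | empty => exact fun Δ hΔ hc => ⟨Δ, le_refl _, hΔ, hc, by simp⟩
  | @insert φ Φ' hφ ih =>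
    intro Δ hΔ hc
    have hφΦ : φ ∈ Φ := hΦ' (by simp)
    have hΦ'Φ : Φ' ⊆ Φ := fun x hx => hΦ' (by simp [hx])
    rcases consistent_step hc φ with h | h
    · obtain ⟨m, hm1, hm2, hm3, hm4⟩ := ih hΦ'Φ (insert φ Δ)
        (Finset.insert_subset hφΦ hΔ) h
      exact ⟨m, fun x hx => hm1 (by simp [hx]), hm2, hm3, fun ψ hψ => by
        rcases Finset.mem_insert.1 hψ with rfl | hψ
        · exact Or.inl (hm1 (by simp))
        · exact hm4 ψ hψ⟩
    · obtain ⟨m, hm1, hm2, hm3, hm4⟩ := ih hΦ'Φ (insert (simNeg φ) Δ)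
        (Finset.insert_subset (hsim φ hφΦ) hΔ) h
      exact ⟨m, fun x hx => hm1 (by simp [hx]), hm2, hm3, fun ψ hψ => by
        rcases Finset.mem_insert.1 hψ with rfl | hψ
        · exact Or.inr (hm1 (by simp))
        · exact hm4 ψ hψ⟩

lemma lindenbaum (hsim : SimClosed Φ) {Δ : Finset Formula} (hΔ : Δ ⊆ Φ)
    (hc : Consistent d ↑Δ) : ∃ m, Δ ⊆ m ∧ MaxCons d Φ m := by
  obtain ⟨m, h1, h2, h3, h4⟩ := lindenbaum_aux hsim Φ (le_refl _) Δ hΔ hc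
  exact ⟨m, h1, h2, h3, h4⟩

end Lindenbaum

end Formula
namespace Formula

section Closure

variable {a b c e φ ψ χ : Formula}

/-- The set of subformulas. -/
def subfmls : Formula → Finset Formula
  | var n => {var n}
  | bot => {bot}
  | imp a b => insert (imp a b) (subfmls a ∪ subfmls b)
  | tri a b => insert (tri a b) (subfmls a ∪ subfmls b)

lemma mem_subfmls_self (φ : Formula) : φ ∈ subfmls φ := by
  cases φ <;> simp [subfmls]

lemma subfmls_imp (h : imp a b ∈ subfmls ψ) : a ∈ subfmls ψ ∧ b ∈ subfmls ψ := by
  induction ψ with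
  | var n => simp [subfmls] at h
  | bot => simp [subfmls] at h
  | imp c e ihc ihe =>
    simp only [subfmls, Finset.mem_insert, Finset.mem_union] at h ⊢
    rcases h with h | h | h
    · injection h with h1 h2
      subst h1; subst h2
      exact ⟨Or.inr (Or.inl (mem_subfmls_self a)), Or.inr (Or.inr (mem_subfmls_self b))⟩
    · exact ⟨Or.inr (Or.inl (ihc h).1), Or.inr (Or.inl (ihc h).2)⟩
    · exact ⟨Or.inr (Or.inr (ihe h).1), Or.inr (Or.inr (ihe h).2)⟩
  | tri c e ihc ihe =>
    simp only [subfmls, Finset.mem_insert, Finset.mem_union] at h ⊢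
    rcases h with h | h | h
    · exact absurd h (by simp)
    · exact ⟨Or.inr (Or.inl (ihc h).1), Or.inr (Or.inl (ihc h).2)⟩
    · exact ⟨Or.inr (Or.inr (ihe h).1), Or.inr (Or.inr (ihe h).2)⟩

lemma subfmls_tri (h : tri a b ∈ subfmls ψ) : a ∈ subfmls ψ ∧ b ∈ subfmls ψ := by
  induction ψ with
  | var n => simp [subfmls] at h
  | bot => simp [subfmls] at h
  | imp c e ihc ihe =>
    simp only [subfmls, Finset.mem_insert, Finset.mem_union] at h ⊢
    rcases h with h | h | h
    · exact absurd h (by simp)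
    · exact ⟨Or.inr (Or.inl (ihc h).1), Or.inr (Or.inl (ihc h).2)⟩
    · exact ⟨Or.inr (Or.inr (ihe h).1), Or.inr (Or.inr (ihe h).2)⟩
  | tri c e ihc ihe =>
    simp only [subfmls, Finset.mem_insert, Finset.mem_union] at h ⊢
    rcases h with h | h | h
    · injection h with h1 h2
      subst h1; subst h2
      exact ⟨Or.inr (Or.inl (mem_subfmls_self a)), Or.inr (Or.inr (mem_subfmls_self b))⟩
    · exact ⟨Or.inr (Or.inl (ihc h).1), Or.inr (Or.inl (ihc h).2)⟩
    · exact ⟨Or.inr (Or.inr (ihe h).1), Or.inr (Or.inr (ihe h).2)⟩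

/-- The closure of φ₀ used for the canonical model. -/
def Phi (φ₀ : Formula) : Finset Formula :=
  insert bot (insert top (subfmls φ₀ ∪ (subfmls φ₀).image simNeg))

lemma bot_mem_Phi (φ₀ : Formula) : bot ∈ Phi φ₀ := by simp [Phi]
lemma top_mem_Phi (φ₀ : Formula) : top ∈ Phi φ₀ := by simp [Phi]
lemma self_mem_Phi (φ₀ : Formula) : φ₀ ∈ Phi φ₀ := by
  simp [Phi, Or.inl (mem_subfmls_self φ₀)]

lemma subfmls_subset_Phi (φ₀ : Formula) : subfmls φ₀ ⊆ Phi φ₀ := by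
  intro x hx; simp [Phi, hx]

lemma simNeg_cases (χ : Formula) :
    simNeg χ = neg χ ∨ ∃ c, χ = imp c bot ∧ simNeg χ = c := by
  match χ with
  | var n => exact Or.inl rfl
  | bot => exact Or.inl rfl
  | tri a b => exact Or.inl rfl
  | imp a bot => exact Or.inr ⟨a, rfl, rfl⟩
  | imp a (var n) => exact Or.inl (simNeg_of_ne_bot (by simp))
  | imp a (imp x y) => exact Or.inl (simNeg_of_ne_bot (by simp))
  | imp a (tri x y) => exact Or.inl (simNeg_of_ne_bot (by simp))

lemma Phi_simClosed (φ₀ : Formula) : SimClosed (Phi φ₀) := by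
  intro φ hφ
  simp only [Phi, Finset.mem_insert, Finset.mem_union, Finset.mem_image] at hφ
  rcases hφ with rfl | rfl | hφ | ⟨χ, hχ, rfl⟩
  · show top ∈ _; exact top_mem_Phi φ₀
  · show bot ∈ _; exact bot_mem_Phi φ₀
  · simp [Phi]; right; right; right; exact ⟨φ, hφ, rfl⟩
  · rcases simNeg_cases χ with h | ⟨c, rfl, h⟩
    · rw [h, simNeg_neg]
      exact subfmls_subset_Phi φ₀ hχ
    · rw [h]
      have hc : c ∈ subfmls φ₀ := (subfmls_imp hχ).1
      simp [Phi]; right; right; right; exact ⟨c, hc, rfl⟩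

lemma Phi_subClosed (φ₀ : Formula) : SubClosed (Phi φ₀) := by
  constructor
  · intro a b hab
    simp only [Phi, Finset.mem_insert, Finset.mem_union, Finset.mem_image] at hab
    rcases hab with h | h | h | ⟨χ, hχ, h⟩
    · exact absurd h (by simp)
    · rw [show top = imp bot bot from rfl] at h
      injection h with h1 h2
      subst h1; subst h2
      exact ⟨bot_mem_Phi φ₀, bot_mem_Phi φ₀⟩
    · obtain ⟨h1, h2⟩ := subfmls_imp h
      exact ⟨subfmls_subset_Phi φ₀ h1, subfmls_subset_Phi φ₀ h2⟩
    · rcases simNeg_cases χ with h' | ⟨c, rfl, h'⟩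
      · rw [h'] at h
        injection h with h1 h2
        subst h1; subst h2
        exact ⟨subfmls_subset_Phi φ₀ hχ, bot_mem_Phi φ₀⟩
      · rw [h'] at h
        subst h
        have hc : imp a b ∈ subfmls φ₀ := (subfmls_imp hχ).1
        obtain ⟨h1, h2⟩ := subfmls_imp hc
        exact ⟨subfmls_subset_Phi φ₀ h1, subfmls_subset_Phi φ₀ h2⟩
  · intro a b hab
    simp only [Phi, Finset.mem_insert, Finset.mem_union, Finset.mem_image] at hab
    rcases hab with h | h | h | ⟨χ, hχ, h⟩
    · exact absurd h (by simp)
    · exact absurd h (by simp [top, neg])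
    · obtain ⟨h1, h2⟩ := subfmls_tri h
      exact ⟨subfmls_subset_Phi φ₀ h1, subfmls_subset_Phi φ₀ h2⟩
    · rcases simNeg_cases χ with h' | ⟨c, rfl, h'⟩
      · rw [h'] at h
        exact absurd h (by simp [neg])
      · rw [h'] at h
        subst h
        have hc : tri a b ∈ subfmls φ₀ := (subfmls_imp hχ).1
        obtain ⟨h1, h2⟩ := subfmls_tri hc
        exact ⟨subfmls_subset_Phi φ₀ h1, subfmls_subset_Phi φ₀ h2⟩

end Closure

end Formula
namespace Formula

section Model

variable (φ₀ : Formula)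

/-- Worlds of the canonical model: a subset of Φ together with an optional tag. -/
def Wld : Type :=
  {m : Finset Formula // m ∈ (Phi φ₀).powerset} × Option {χ : Formula // χ ∈ Phi φ₀}

noncomputable instance : Fintype (Wld φ₀) := by
  unfold Wld; infer_instance

/-- The canonical accessibility relation. -/
def mrel : Wld φ₀ → Wld φ₀ → Wld φ₀ → Prop := fun x u v =>
  ∃ (a b : Formula) (h : tri a b ∈ Phi φ₀),
    u.2 = some ⟨tri a b, h⟩ ∧ tri a b ∉ x.1.val ∧
    MaxCons false (Phi φ₀) u.1.val ∧ a ∈ u.1.val ∧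
    ¬ Deriv false ↑x.1.val (tri (bigConj u.1.val) b) ∧
    MaxCons false (Phi φ₀) v.1.val ∧ b ∉ v.1.val

/-- The canonical valuation. -/
def mval : Wld φ₀ → ℕ → Prop := fun x p => var p ∈ x.1.val

/-- Truth lemma for the canonical model. -/
lemma truth : ∀ φ : Formula, φ ∈ Phi φ₀ → ∀ x : Wld φ₀,
    MaxCons false (Phi φ₀) x.1.val →
    (Forces (mrel φ₀) (mval φ₀) x φ ↔ φ ∈ x.1.val) := by
  have hsim := Phi_simClosed φ₀
  have hsub := Phi_subClosed φ₀
  intro φ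
  induction φ with
  | var p => intro _ x hx; exact Iff.rfl
  | bot =>
    intro _ x hx
    simp only [Forces]
    constructor
    · exact fun h => h.elim
    · intro h
      exact absurd (Deriv.hyp (Finset.mem_coe.2 h)) hx.2.1
  | imp a b iha ihb =>
    intro hφ x hx
    obtain ⟨haΦ, hbΦ⟩ := hsub.1 a b hφ
    have ha := iha haΦ x hx
    have hb := ihb hbΦ x hx
    simp only [Forces]
    rw [ha, hb]
    constructor
    · intro hmem
      by_contra hni
      have hsn : simNeg (imp a b) ∈ x.1.val := (hx.2.2 _ hφ).resolve_left hni
      by_cases hbb : b = bot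
      · subst hbb
        rw [show simNeg (imp a bot) = a from rfl] at hsn
        have : bot ∈ x.1.val := hmem hsn
        exact absurd (Deriv.hyp (Finset.mem_coe.2 this)) hx.2.1
      · rw [simNeg_of_ne_bot hbb] at hsn
        have hax : a ∈ x.1.val := by
          by_contra hna
          have hsa : simNeg a ∈ x.1.val := (hx.2.2 _ haΦ).resolve_left hna
          have d1 : Deriv false ↑x.1.val (neg a) :=
            .mp (.thm prv_simNeg_imp_neg) (.hyp (Finset.mem_coe.2 hsa))
          have d2 : Deriv false ↑x.1.val (imp a b) := .mp (.thm prv_negE) d1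
          exact hx.2.1 (.mp (.hyp (Finset.mem_coe.2 hsn)) d2)
        have hbx : b ∈ x.1.val := hmem hax
        have d2 : Deriv false ↑x.1.val (imp a b) :=
          .mp (.thm prv_K) (.hyp (Finset.mem_coe.2 hbx))
        exact hx.2.1 (.mp (.hyp (Finset.mem_coe.2 hsn)) d2)
    · intro hmem hax
      by_contra hnb
      have hsb : simNeg b ∈ x.1.val := (hx.2.2 _ hbΦ).resolve_left hnb
      have d1 : Deriv false ↑x.1.val b :=
        .mp (.hyp (Finset.mem_coe.2 hmem)) (.hyp (Finset.mem_coe.2 hax))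
      have d2 : Deriv false ↑x.1.val (neg b) :=
        .mp (.thm prv_simNeg_imp_neg) (.hyp (Finset.mem_coe.2 hsb))
      exact hx.2.1 (.mp d2 d1)
  | tri a b iha ihb =>
    intro hφ x hx
    obtain ⟨haΦ, hbΦ⟩ := hsub.2 a b hφ
    simp only [Forces]
    constructor
    · -- forces → mem
      intro hf
      by_contra hnmem
      obtain ⟨u₀, hu₀max, hau₀, hnder⟩ :=
        exists_witness hsim hx hφ hnmem haΦ
      obtain ⟨m₀, hm₀max, hbm₀⟩ := exists_maxcons_not_mem hsim hnder
      set uw : Wld φ₀ := ⟨⟨u₀, Finset.mem_powerset.2 hu₀max.1⟩, some ⟨tri a b, hφ⟩⟩ with huw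
      set vw : Wld φ₀ := ⟨⟨m₀, Finset.mem_powerset.2 hm₀max.1⟩, none⟩ with hvw
      have hrel : mrel φ₀ x uw vw :=
        ⟨a, b, hφ, rfl, hnmem, hu₀max, hau₀, hnder, hm₀max, hbm₀⟩
      have hfa : Forces (mrel φ₀) (mval φ₀) uw a := (iha haΦ uw hu₀max).2 hau₀
      obtain ⟨v', hrel', hfb⟩ := hf uw vw hrel hfa
      obtain ⟨a'', b'', h'', ht'', _, _, _, _, hmaxv', hbv'⟩ := hrel'
      have heq : tri a'' b'' = tri a b := by
        have := Option.some.inj ht''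
        exact (congrArg Subtype.val this).symm
      injection heq with h1 h2
      subst h1; subst h2
      exact hbv' ((ihb hbΦ v' hmaxv').1 hfb)
    · -- mem → forces
      intro hmem u v hrel hfa
      obtain ⟨a', b', h', ht, hnx, hmaxu, ha'u, hnder, hmaxv, hb'v⟩ := hrel
      have hau : a ∈ u.1.val := (iha haΦ u hmaxu).1 hfa
      have hd : Deriv false ↑x.1.val (tri a b) := .hyp (Finset.mem_coe.2 hmem)
      obtain ⟨m, hmmax, hbm, hb'm⟩ :=
        exists_maxcons_mem_not_mem hsim hbΦ hau hnder hd
      refine ⟨⟨⟨m, Finset.mem_powerset.2 hmmax.1⟩, none⟩,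
        ⟨a', b', h', ht, hnx, hmaxu, ha'u, hnder, hmmax, hb'm⟩, ?_⟩
      exact (ihb hbΦ ⟨⟨m, Finset.mem_powerset.2 hmmax.1⟩, none⟩ hmmax).2 hbm

end Model

end Formula

/-- Kripke completeness of ℜ: if φ₀ is not a theorem of ℜ, then some world of
some (finite) Kripke model does not force φ₀. -/
theorem kripke_completeness_R (φ₀ : Formula) (h : ¬ Formula.Prv false φ₀) :
    ∃ (M : KripkeModel) (w : M.W), ¬ M.Forces w φ₀ := by
  open Formula in
  have hsim := Phi_simClosed φ₀
  have hsn : simNeg φ₀ ∈ Phi φ₀ := hsim φ₀ (self_mem_Phi φ₀)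
  have hcons : Consistent false ↑({simNeg φ₀} : Finset Formula) :=
    consistent_singleton_simNeg h
  obtain ⟨m, hm1, hmmax⟩ :=
    lindenbaum hsim (by simpa using hsn) hcons
  have hsnm : simNeg φ₀ ∈ m := hm1 (by simp)
  have hφ₀m : φ₀ ∉ m := by
    intro hmem
    exact hmmax.2.1 (deriv_bot_of_mem_simNeg (Finset.mem_coe.2 hmem) (Finset.mem_coe.2 hsnm))
  refine ⟨⟨Wld φ₀, Finite.of_fintype _, mrel φ₀, mval φ₀⟩,
    ⟨⟨m, Finset.mem_powerset.2 hmmax.1⟩, none⟩, ?_⟩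
  intro hf
  exact hφ₀m ((truth φ₀ φ₀ (self_mem_Phi φ₀) _ hmmax).1 hf)
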